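/- Let A and B be Banach algebras and φ ∈ Hom(B,ℂ). Under the identification (A⊕_φ B)** ≅ A** ⊕_φ B**, the topological centre satisfies Z((A⊕_φ B)**) ≅ Z(A**) ⊕_φ Z(B**): an element (m₁,m₂) has weak-*–weak-* continuous left multiplication on A**⊕_φ B** if and only if m₁ ∈ Z(A**) and m₂ ∈ Z(B**). -/

import Mathlib

open scoped Topology

namespace CharAmen


variable {E : Type*} [NormedAddCommGroup E] [NormedSpace ℂ E]

noncomputable def fdotB (μ : E →L[ℂ] E →L[ℂ] E) (f : E →L[ℂ] ℂ) (x : E) : E →L[ℂ] ℂ :=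
  f.comp (μ x)

@[simp] lemma fdotB_apply (μ : E →L[ℂ] E →L[ℂ] E) (f : E →L[ℂ] ℂ) (x y : E) :
    fdotB μ f x y = f (μ x y) := rfl

lemma fdotB_norm_le (μ : E →L[ℂ] E →L[ℂ] E) (f : E →L[ℂ] ℂ) (x : E) :
    ‖fdotB μ f x‖ ≤ ‖f‖ * (‖μ‖ * ‖x‖) :=
  (ContinuousLinearMap.opNorm_comp_le f (μ x)).trans
    (by gcongr; exact μ.le_opNorm x)

noncomputable def mdotB (μ : E →L[ℂ] E →L[ℂ] E) (m : (E →L[ℂ] ℂ) →L[ℂ] ℂ)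
    (f : E →L[ℂ] ℂ) : E →L[ℂ] ℂ :=
  LinearMap.mkContinuous
    { toFun := fun x => m (fdotB μ f x)
      map_add' := by
        intro x y
        show m (fdotB μ f (x + y)) = m (fdotB μ f x) + m (fdotB μ f y)
        have : fdotB μ f (x + y) = fdotB μ f x + fdotB μ f y := by
          ext z; simp [fdotB]
        rw [this, map_add]
      map_smul' := by
        intro c x
        show m (fdotB μ f (c • x)) = c • m (fdotB μ f x)
        have : fdotB μ f (c • x) = c • fdotB μ f x := by
          ext z; simp [fdotB]
        rw [this, map_smul] }
    (‖m‖ * ‖f‖ * ‖μ‖)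
    (by
      intro x
      calc ‖m (fdotB μ f x)‖ ≤ ‖m‖ * ‖fdotB μ f x‖ := m.le_opNorm _
        _ ≤ ‖m‖ * (‖f‖ * (‖μ‖ * ‖x‖)) := by
            gcongr
            exact fdotB_norm_le μ f x
        _ = ‖m‖ * ‖f‖ * ‖μ‖ * ‖x‖ := by ring)

@[simp] lemma mdotB_apply (μ : E →L[ℂ] E →L[ℂ] E) (m : (E →L[ℂ] ℂ) →L[ℂ] ℂ)
    (f : E →L[ℂ] ℂ) (x : E) : mdotB μ m f x = m (fdotB μ f x) := rfl

lemma mdotB_norm_le (μ : E →L[ℂ] E →L[ℂ] E) (m : (E →L[ℂ] ℂ) →L[ℂ] ℂ) (f : E →L[ℂ] ℂ) :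
    ‖mdotB μ m f‖ ≤ ‖m‖ * ‖f‖ * ‖μ‖ :=
  LinearMap.mkContinuous_norm_le _ (by positivity) _

/-- First Arens product relative to μ: `⟨n ⋆ m, f⟩ = ⟨n, m·f⟩`. -/
noncomputable def arensB (μ : E →L[ℂ] E →L[ℂ] E) (n m : (E →L[ℂ] ℂ) →L[ℂ] ℂ) :
    (E →L[ℂ] ℂ) →L[ℂ] ℂ :=
  LinearMap.mkContinuous
    { toFun := fun f => n (mdotB μ m f)
      map_add' := by
        intro f g
        show n (mdotB μ m (f + g)) = n (mdotB μ m f) + n (mdotB μ m g)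
        have : mdotB μ m (f + g) = mdotB μ m f + mdotB μ m g := by
          ext x; simp [fdotB]
        rw [this, map_add]
      map_smul' := by
        intro c f
        show n (mdotB μ m (c • f)) = c • n (mdotB μ m f)
        have : mdotB μ m (c • f) = c • mdotB μ m f := by
          ext x; simp [fdotB]
        rw [this, map_smul] }
    (‖n‖ * ‖m‖ * ‖μ‖)
    (by
      intro f
      calc ‖n (mdotB μ m f)‖ ≤ ‖n‖ * ‖mdotB μ m f‖ := n.le_opNorm _
        _ ≤ ‖n‖ * (‖m‖ * ‖f‖ * ‖μ‖) := by
            gcongr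
            exact mdotB_norm_le μ m f
        _ = ‖n‖ * ‖m‖ * ‖μ‖ * ‖f‖ := by ring)

@[simp] lemma arensB_apply (μ : E →L[ℂ] E →L[ℂ] E) (n m : (E →L[ℂ] ℂ) →L[ℂ] ℂ)
    (f : E →L[ℂ] ℂ) : arensB μ n m f = n (mdotB μ m f) := rfl


section Ring
variable {A : Type*} [NormedRing A] [NormedAlgebra ℂ A]

/-- `f · a` : `⟨f·a, b⟩ = ⟨f, a*b⟩`. -/
noncomputable def fdot (f : A →L[ℂ] ℂ) (a : A) : A →L[ℂ] ℂ :=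
  f.comp (ContinuousLinearMap.mul ℂ A a)

@[simp] lemma fdot_apply (f : A →L[ℂ] ℂ) (a b : A) : fdot f a b = f (a * b) := rfl

/-- Nonzero (continuous) characters of `A`. -/
def IsChar (φ : A →L[ℂ] ℂ) : Prop := φ ≠ 0 ∧ ∀ a b, φ (a * b) = φ a * φ b

/-- A `φ`-mean on `A*`. -/
def IsMean (φ : A →L[ℂ] ℂ) (m : (A →L[ℂ] ℂ) →L[ℂ] ℂ) : Prop :=
  m φ = 1 ∧ ∀ (f : A →L[ℂ] ℂ) (a : A), m (fdot f a) = φ a * m f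

/-- A bounded right approximate identity contained in `S ⊆ A`, for `S`. -/
def HasBRAI (S : Set A) : Prop :=
  ∃ (ι : Type) (l : Filter ι) (e : ι → A), l.NeBot ∧ (∀ i, e i ∈ S) ∧
    (∃ M, ∀ i, ‖e i‖ ≤ M) ∧ ∀ a ∈ S, Filter.Tendsto (fun i => ‖a * e i - a‖) l (𝓝 0)

/-- The first Arens product on `A**`. -/
noncomputable def arens (n m : (A →L[ℂ] ℂ) →L[ℂ] ℂ) : (A →L[ℂ] ℂ) →L[ℂ] ℂ :=
  arensB (ContinuousLinearMap.mul ℂ A) n m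

end Ring

/-- Membership in the topological centre: weak-*–weak-* continuity of left
multiplication by `m` in the (first) Arens product. -/
def MemTopCentre {A : Type*} [NormedRing A] [NormedAlgebra ℂ A]
    (m : (A →L[ℂ] ℂ) →L[ℂ] ℂ) : Prop :=
  Continuous (fun n : WeakDual ℂ (A →L[ℂ] ℂ) =>
    StrongDual.toWeakDual (𝕜 := ℂ) (E := A →L[ℂ] ℂ)
      (arens m (WeakDual.toStrongDual (𝕜 := ℂ) (E := A →L[ℂ] ℂ) n)))

/-- Left multiplication by `(m₁, m₂)` in `A** ⊕_φ B**`,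
`(m₁,m₂) ⊙ (n₁,n₂) = (m₁·n₁ + m₂(φ)n₁ + n₂(φ)m₁, m₂·n₂)`. -/
noncomputable def odotLeft {A B : Type*} [NormedRing A] [NormedAlgebra ℂ A]
    [NormedRing B] [NormedAlgebra ℂ B] (φ : B →L[ℂ] ℂ)
    (m₁ : (A →L[ℂ] ℂ) →L[ℂ] ℂ) (m₂ : (B →L[ℂ] ℂ) →L[ℂ] ℂ)
    (n₁ : (A →L[ℂ] ℂ) →L[ℂ] ℂ) (n₂ : (B →L[ℂ] ℂ) →L[ℂ] ℂ) :
    (((A →L[ℂ] ℂ) →L[ℂ] ℂ) × ((B →L[ℂ] ℂ) →L[ℂ] ℂ)) :=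
  (arens m₁ n₁ + m₂ φ • n₁ + n₂ φ • m₁, arens m₂ n₂)

lemma continuous_toWeakDual_iff {X : Type*} [TopologicalSpace X]
    {F : Type*} [NormedAddCommGroup F] [NormedSpace ℂ F]
    (G : X → (F →L[ℂ] ℂ)) :
    Continuous (fun x => StrongDual.toWeakDual (𝕜 := ℂ) (E := F) (G x)) ↔
      ∀ y : F, Continuous fun x => G x y := by
  constructor
  · intro h y
    exact (WeakDual.eval_continuous (𝕜 := ℂ) (E := F) y).comp h
  · intro h
    exact WeakBilin.continuous_of_continuous_eval _ h

lemma memTopCentre_iff {A : Type*} [NormedRing A] [NormedAlgebra ℂ A]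
    (m : (A →L[ℂ] ℂ) →L[ℂ] ℂ) :
    MemTopCentre m ↔ ∀ f : A →L[ℂ] ℂ,
      Continuous fun n : WeakDual ℂ (A →L[ℂ] ℂ) =>
        arens m (WeakDual.toStrongDual (𝕜 := ℂ) (E := A →L[ℂ] ℂ) n) f :=
  continuous_toWeakDual_iff _

lemma arens_zero_right {A : Type*} [NormedRing A] [NormedAlgebra ℂ A]
    (m : (A →L[ℂ] ℂ) →L[ℂ] ℂ) : arens m 0 = 0 := by
  ext f
  have : mdotB (ContinuousLinearMap.mul ℂ A) (0 : (A →L[ℂ] ℂ) →L[ℂ] ℂ) f = 0 := by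
    ext x; simp
  simp [arens, this]

/-- `Z((A ⊕_φ B)**) ≅ Z(A**) ⊕_φ Z(B**)`: under the identification
`(A ⊕_φ B)** ≅ A** ⊕_φ B**`, left multiplication by `(m₁, m₂)` is weak-*–weak-*
continuous iff `m₁ ∈ Z(A**)` and `m₂ ∈ Z(B**)`. -/
theorem oplus_topological_centre
    {A B : Type*} [NormedRing A] [NormedAlgebra ℂ A] [CompleteSpace A]
    [NormedRing B] [NormedAlgebra ℂ B] [CompleteSpace B]
    (φ : B →L[ℂ] ℂ) (hφ : IsChar φ)
    (m₁ : (A →L[ℂ] ℂ) →L[ℂ] ℂ) (m₂ : (B →L[ℂ] ℂ) →L[ℂ] ℂ) :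
    Continuous (fun n : WeakDual ℂ (A →L[ℂ] ℂ) × WeakDual ℂ (B →L[ℂ] ℂ) =>
      (StrongDual.toWeakDual (𝕜 := ℂ) (E := A →L[ℂ] ℂ)
          ((odotLeft φ m₁ m₂ (WeakDual.toStrongDual (𝕜 := ℂ) (E := A →L[ℂ] ℂ) n.1)
            (WeakDual.toStrongDual (𝕜 := ℂ) (E := B →L[ℂ] ℂ) n.2)).1),
       StrongDual.toWeakDual (𝕜 := ℂ) (E := B →L[ℂ] ℂ)
          ((odotLeft φ m₁ m₂ (WeakDual.toStrongDual (𝕜 := ℂ) (E := A →L[ℂ] ℂ) n.1)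
            (WeakDual.toStrongDual (𝕜 := ℂ) (E := B →L[ℂ] ℂ) n.2)).2))) ↔
    (MemTopCentre m₁ ∧ MemTopCentre m₂) := by

  have key1 : ∀ (a : (A →L[ℂ] ℂ) →L[ℂ] ℂ) (b : (B →L[ℂ] ℂ) →L[ℂ] ℂ) (f : A →L[ℂ] ℂ),
      (odotLeft φ m₁ m₂ a b).1 f = arens m₁ a f + m₂ φ * a f + b φ * m₁ f := by
    intro a b f
    simp [odotLeft, smul_eq_mul]
  rw [continuous_prodMk, continuous_toWeakDual_iff, continuous_toWeakDual_iff,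
      memTopCentre_iff, memTopCentre_iff]
  simp only [key1]
  constructor
  · rintro ⟨h1, h2⟩
    constructor
    · intro f
      have hc : Continuous (fun n₁ : WeakDual ℂ (A →L[ℂ] ℂ) =>
          (n₁, (0 : WeakDual ℂ (B →L[ℂ] ℂ)))) := continuous_id.prodMk continuous_const
      have h := (h1 f).comp hc
      simp only [Function.comp_def, map_zero, ContinuousLinearMap.zero_apply, zero_mul,
        add_zero] at h
      have he : Continuous fun n₁ : WeakDual ℂ (A →L[ℂ] ℂ) =>
          m₂ φ * (WeakDual.toStrongDual (𝕜 := ℂ) (E := A →L[ℂ] ℂ) n₁) f :=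
        continuous_const.mul (WeakDual.eval_continuous (𝕜 := ℂ) (E := A →L[ℂ] ℂ) f)
      have := h.sub he
      simpa [Pi.sub_def] using this
    · intro g
      have hc : Continuous (fun n₂ : WeakDual ℂ (B →L[ℂ] ℂ) =>
          ((0 : WeakDual ℂ (A →L[ℂ] ℂ)), n₂)) := continuous_const.prodMk continuous_id
      have h := (h2 g).comp hc
      simpa [Function.comp_def, odotLeft] using h
  · rintro ⟨h1, h2⟩
    refine ⟨fun f => ?_, fun g => ?_⟩
    · refine (((h1 f).comp continuous_fst).add ?_).add ?_
      · exact continuous_const.mul ((WeakDual.eval_continuous (𝕜 := ℂ) (E := A →L[ℂ] ℂ) f).comp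
          continuous_fst)
      · exact (((WeakDual.eval_continuous (𝕜 := ℂ) (E := B →L[ℂ] ℂ) φ).comp
          continuous_snd)).mul continuous_const
    · exact (h2 g).comp continuous_snd

end CharAmen
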